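/- For every episode G and sequence s, |nm(G;s)| equals the maximum cardinality of a collection of pairwise non-overlapping contiguous sub-windows of s, each of which covers G; i.e., the greedy count of non-overlapping minimal windows equals the maximal number of non-overlapping occurrences of G in s. -/

import Mathlib

open scoped Classical

/-- An episode: a finite DAG with nodes labeled by symbols of `σ`. -/
structure Episode (σ : Type) where
  nodes : Finset ℕ
  edges : Finset (ℕ × ℕ)
  lab : (v : ℕ) → v ∈ nodes → σ
  edges_mem : ∀ e ∈ edges, e.1 ∈ nodes ∧ e.2 ∈ nodes
  acyclic : ∀ v, ¬ Relation.TransGen (fun u w => (u, w) ∈ edges) v v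

/-- `s` covers the episode `G`: an injective map of nodes to (0-based) positions of `s`
matching labels and respecting the edge order. -/
def Covers {σ : Type} (s : List σ) (G : Episode σ) : Prop :=
  ∃ f : ℕ → ℕ, Set.InjOn f ↑G.nodes ∧
    (∀ v (hv : v ∈ G.nodes), s[f v]? = some (G.lab v hv)) ∧
    (∀ e ∈ G.edges, f e.1 < f e.2)

/-- The contiguous sub-window `s[i,j]` (1-based, inclusive). -/
def window {α : Type} (s : List α) (i j : ℕ) : List α := (s.take j).drop (i - 1)

/-- `s` is a minimal window for `G`: `s` covers `G` but no proper contiguous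
sub-window `s[i,j]` with `(i,j) ≠ (1,L)` covers `G`. -/
def IsMinWindow {σ : Type} (s : List σ) (G : Episode σ) : Prop :=
  Covers s G ∧ ∀ i j : ℕ, 1 ≤ i → i ≤ j → j ≤ s.length → (i, j) ≠ (1, s.length) →
    ¬ Covers (window s i j) G

/-- `H` is a sub-episode of `G`: a subset of the nodes and a subset of the edges,
keeping the labels. -/
def SubEpisode {σ : Type} (H G : Episode σ) : Prop :=
  H.nodes ⊆ G.nodes ∧ H.edges ⊆ G.edges ∧
    ∀ v (hv : v ∈ H.nodes) (hg : v ∈ G.nodes), H.lab v hv = G.lab v hg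

/-- Two windows, given as 1-based inclusive index intervals, overlap if the
intervals intersect. -/
def Overlap (w x : ℕ × ℕ) : Prop := w.1 ≤ x.2 ∧ x.1 ≤ w.2

/-- `w = (i,j)` is a minimal window of `G` in `s`: `s[i,j]` is a minimal window for `G`. -/
def MinWinAt {σ : Type} (G : Episode σ) (s : List σ) (w : ℕ × ℕ) : Prop :=
  1 ≤ w.1 ∧ w.1 ≤ w.2 ∧ w.2 ≤ s.length ∧ IsMinWindow (window s w.1 w.2) G

/-- The list of all minimal windows of `G` in `s`, in order of starting position. -/
noncomputable def minWinList {σ : Type} (G : Episode σ) (s : List σ) : List (ℕ × ℕ) :=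
  ((List.range (s.length + 1)).flatMap (fun i =>
      (List.range (s.length + 1)).map (fun j => (i, j)))).filter
    (fun w => MinWinAt G s w)

/-- Greedy selection: take the first window, discard all windows overlapping it, repeat. -/
noncomputable def greedy : List (ℕ × ℕ) → List (ℕ × ℕ)
  | [] => []
  | w :: rest => w :: greedy (rest.filter (fun x => ¬ Overlap w x))
termination_by l => l.length
decreasing_by
  simp only [List.length_cons]
  first
    | exact Nat.lt_succ_of_le (List.length_filter_le _ _)
    | (simp only [List.length_unattach]
       exact Nat.lt_succ_of_le ((List.length_filter_le _ _).trans (by simp)))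
    | (simp only [List.length_unattach, List.length_attach] at *
       omega)

/-- `nm G s`: the greedily chosen collection of non-overlapping minimal windows
of `G` in `s`. -/
noncomputable def nm {σ : Type} (G : Episode σ) (s : List σ) : List (ℕ × ℕ) :=
  greedy (minWinList G s)

/-! ### Auxiliary lemmas -/

lemma overlap_symm {w x : ℕ × ℕ} (h : Overlap w x) : Overlap x w := ⟨h.2, h.1⟩

lemma overlap_self {w : ℕ × ℕ} (h : w.1 ≤ w.2) : Overlap w w := ⟨h, h⟩

lemma window_length {σ : Type} (s : List σ) (i j : ℕ) :
    (window s i j).length = min j s.length - (i - 1) := by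
  simp [window]

lemma window_window {σ : Type} (s : List σ) (i j a b : ℕ) (hi : 1 ≤ i) (ha : 1 ≤ a) :
    window (window s i j) a b = window s (i + a - 1) (min j (i + b - 1)) := by
  unfold window
  rw [List.take_drop, List.take_take, List.drop_drop]
  have h1 : ((i - 1) + b) ⊓ j = j ⊓ (i + b - 1) := by omega
  have h2 : (i - 1) + (a - 1) = (i + a - 1) - 1 := by omega
  rw [h1, h2]

lemma minWinAt_antichain {σ : Type} {G : Episode σ} {s : List σ} {w x : ℕ × ℕ}
    (hw : MinWinAt G s w) (hx : MinWinAt G s x) (h1 : w.1 ≤ x.1) (h2 : x.2 ≤ w.2) :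
    w = x := by
  obtain ⟨hw1, hw12, hw2, hwmin⟩ := hw
  obtain ⟨hx1, hx12, hx2, hxmin⟩ := hx
  have hwx : x.1 ≤ w.2 := le_trans hx12 h2
  have hwin : window (window s w.1 w.2) (x.1 - w.1 + 1) (x.2 - w.1 + 1) = window s x.1 x.2 := by
    rw [window_window _ _ _ _ _ hw1 (by omega)]
    congr 1 <;> omega
  have hlen : (window s w.1 w.2).length = w.2 - w.1 + 1 := by
    rw [window_length]; omega
  by_contra hne
  refine hwmin.2 (x.1 - w.1 + 1) (x.2 - w.1 + 1) (by omega) (by omega) (by omega) ?_ ?_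
  · rw [hlen]
    intro hc
    have hp := congrArg Prod.fst hc
    have hq := congrArg Prod.snd hc
    simp only at hp hq
    exact hne (Prod.ext (by omega) (by omega))
  · rw [hwin]; exact hxmin.1

lemma exists_minWinAt {σ : Type} {G : Episode σ} {s : List σ} :
    ∀ (d i j : ℕ), j - i ≤ d → 1 ≤ i → i ≤ j → j ≤ s.length → Covers (window s i j) G →
    ∃ p : ℕ × ℕ, i ≤ p.1 ∧ p.1 ≤ p.2 ∧ p.2 ≤ j ∧ MinWinAt G s p := by
  intro d
  induction d with
  | zero =>
    intro i j hd hi hij hj hcov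
    by_cases hmin : IsMinWindow (window s i j) G
    · exact ⟨(i, j), le_refl _, hij, le_refl _, hi, hij, hj, hmin⟩
    · exfalso
      have hlen : (window s i j).length = j - i + 1 := by rw [window_length]; omega
      rw [IsMinWindow] at hmin
      push_neg at hmin
      obtain ⟨a, b, ha, hab, hb, hne, hcov'⟩ := hmin hcov
      rw [hlen] at hb hne
      have hor : a ≠ 1 ∨ b ≠ j - i + 1 := by
        by_contra h
        push_neg at h
        exact hne (by rw [h.1, h.2])
      omega
  | succ d ih =>
    intro i j hd hi hij hj hcov
    by_cases hmin : IsMinWindow (window s i j) G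
    · exact ⟨(i, j), le_refl _, hij, le_refl _, hi, hij, hj, hmin⟩
    · have hlen : (window s i j).length = j - i + 1 := by rw [window_length]; omega
      rw [IsMinWindow] at hmin
      push_neg at hmin
      obtain ⟨a, b, ha, hab, hb, hne, hcov'⟩ := hmin hcov
      rw [window_window _ _ _ _ _ hi ha] at hcov'
      rw [hlen] at hb hne
      have hor : a ≠ 1 ∨ b ≠ j - i + 1 := by
        by_contra h
        push_neg at h
        exact hne (by rw [h.1, h.2])
      have hmm : min j (i + b - 1) = i + b - 1 := by omega
      rw [hmm] at hcov'
      obtain ⟨p, hp1, hp2, hp3, hp4⟩ :=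
        ih (i + a - 1) (i + b - 1) (by omega) (by omega) (by omega) (by omega) hcov'
      exact ⟨p, by omega, hp2, by omega, hp4⟩

noncomputable def shrink {σ : Type} (G : Episode σ) (s : List σ) (w : ℕ × ℕ) : ℕ × ℕ :=
  if h : ∃ p : ℕ × ℕ, w.1 ≤ p.1 ∧ p.1 ≤ p.2 ∧ p.2 ≤ w.2 ∧ MinWinAt G s p then h.choose else w

lemma shrink_spec {σ : Type} {G : Episode σ} {s : List σ} {w : ℕ × ℕ}
    (h1 : 1 ≤ w.1) (h2 : w.1 ≤ w.2) (h3 : w.2 ≤ s.length)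
    (hc : Covers (window s w.1 w.2) G) :
    w.1 ≤ (shrink G s w).1 ∧ (shrink G s w).1 ≤ (shrink G s w).2 ∧
      (shrink G s w).2 ≤ w.2 ∧ MinWinAt G s (shrink G s w) := by
  have hex : ∃ p : ℕ × ℕ, w.1 ≤ p.1 ∧ p.1 ≤ p.2 ∧ p.2 ≤ w.2 ∧ MinWinAt G s p :=
    exists_minWinAt (w.2 - w.1) w.1 w.2 le_rfl h1 h2 h3 hc
  rw [shrink, dif_pos hex]
  exact hex.choose_spec

lemma mem_minWinList {σ : Type} {G : Episode σ} {s : List σ} {w : ℕ × ℕ} :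
    w ∈ minWinList G s ↔ MinWinAt G s w := by
  simp only [minWinList, List.mem_filter, List.mem_flatMap, List.mem_map, List.mem_range,
    decide_eq_true_eq]
  constructor
  · rintro ⟨-, h⟩; exact h
  · intro h
    obtain ⟨h1, h2, h3, -⟩ := id h
    exact ⟨⟨w.1, by omega, w.2, by omega, rfl⟩, h⟩

lemma minWinList_pairwise {σ : Type} {G : Episode σ} {s : List σ} :
    (minWinList G s).Pairwise (fun a b => a.2 ≤ b.2) := by
  have hbase : ((List.range (s.length + 1)).flatMap (fun i =>
      (List.range (s.length + 1)).map (fun j => (i, j)))).Pairwise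
      (fun a b : ℕ × ℕ => a.1 < b.1 ∨ (a.1 = b.1 ∧ a.2 < b.2)) := by
    rw [List.pairwise_flatMap]
    constructor
    · intro a _
      rw [List.pairwise_map]
      exact (List.pairwise_lt_range).imp (fun h => Or.inr ⟨rfl, h⟩)
    · refine (List.pairwise_lt_range (n := s.length + 1)).imp_of_mem ?_
      intro a b _ _ hab x hx y hy
      simp only [List.mem_map, List.mem_range] at hx hy
      obtain ⟨jx, -, rfl⟩ := hx
      obtain ⟨jy, -, rfl⟩ := hy
      exact Or.inl hab
  have hfil : (minWinList G s).Pairwise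
      (fun a b : ℕ × ℕ => a.1 < b.1 ∨ (a.1 = b.1 ∧ a.2 < b.2)) := hbase.filter _
  refine hfil.imp_of_mem ?_
  intro a b ha hb hab
  have hma := mem_minWinList.mp ha
  have hmb := mem_minWinList.mp hb
  rcases hab with h | ⟨-, h⟩
  · by_contra hcon
    have heq := minWinAt_antichain hma hmb (le_of_lt h) (by omega)
    rw [heq] at h
    exact absurd h (lt_irrefl _)
  · omega

lemma greedy_subset (l : List (ℕ × ℕ)) : ∀ x ∈ greedy l, x ∈ l := by
  induction l using greedy.induct with
  | case1 => intro x hx; rw [greedy] at hx; exact absurd hx List.not_mem_nil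
  | case2 w rest ih =>
    rw [List.unattach_filter (g := fun x => decide ¬Overlap w x) (hf := fun _ _ => rfl),
      List.unattach_attach] at ih
    intro x hx
    rw [greedy, List.mem_cons] at hx
    rw [List.mem_cons]
    rcases hx with rfl | hx
    · exact Or.inl rfl
    · exact Or.inr (List.mem_of_mem_filter (ih x hx))

lemma greedy_pairwise (l : List (ℕ × ℕ)) :
    (greedy l).Pairwise (fun a b => ¬ Overlap a b) := by
  induction l using greedy.induct with
  | case1 => rw [greedy]; exact List.Pairwise.nil
  | case2 w rest ih =>
    rw [List.unattach_filter (g := fun x => decide ¬Overlap w x) (hf := fun _ _ => rfl),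
      List.unattach_attach] at ih
    rw [greedy, List.pairwise_cons]
    refine ⟨?_, ih⟩
    intro x hx
    have h2 := (List.mem_filter.mp (greedy_subset _ x hx)).2
    simpa using h2

lemma greedy_opt : ∀ (n : ℕ) (l : List (ℕ × ℕ)), l.length ≤ n →
    (∀ x ∈ l, x.1 ≤ x.2) → l.Pairwise (fun a b => a.2 ≤ b.2) →
    ∀ V : Finset (ℕ × ℕ), (∀ x ∈ V, x ∈ l) →
    (∀ w ∈ V, ∀ x ∈ V, w ≠ x → ¬ Overlap w x) →
    V.card ≤ (greedy l).length := by
  intro n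
  induction n with
  | zero =>
    intro l hl _ _ V hV _
    have hl0 : l = [] := List.length_eq_zero_iff.mp (Nat.le_zero.mp hl)
    subst hl0
    have hV0 : V = ∅ := Finset.eq_empty_of_forall_notMem
      (fun x hx => by simpa using hV x hx)
    rw [hV0]
    simp
  | succ n ih =>
    intro l hlen hle hpw V hV hno
    match l with
    | [] =>
      have hV0 : V = ∅ := Finset.eq_empty_of_forall_notMem
        (fun x hx => by simpa using hV x hx)
      rw [hV0]
      simp
    | w :: rest =>
      rw [greedy, List.length_cons]
      have hcard1 : (V.filter (fun x => Overlap w x)).card ≤ 1 := by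
        rw [Finset.card_le_one]
        intro a ha b hb
        rw [Finset.mem_filter] at ha hb
        by_contra hab
        by_cases haw : a = w
        · exact hno a ha.1 b hb.1 hab (haw ▸ hb.2)
        · by_cases hbw : b = w
          · exact hno a ha.1 b hb.1 hab (overlap_symm (hbw ▸ ha.2))
          · have haR : a ∈ rest := by
              rcases List.mem_cons.mp (hV a ha.1) with h | h
              · exact absurd h haw
              · exact h
            have hbR : b ∈ rest := by
              rcases List.mem_cons.mp (hV b hb.1) with h | h
              · exact absurd h hbw
              · exact h
            have hwa : w.2 ≤ a.2 := (List.pairwise_cons.mp hpw).1 a haR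
            have hwb : w.2 ≤ b.2 := (List.pairwise_cons.mp hpw).1 b hbR
            exact hno a ha.1 b hb.1 hab ⟨le_trans ha.2.2 hwb, le_trans hb.2.2 hwa⟩
      have hsplit := Finset.card_filter_add_card_filter_not
        (s := V) (fun x => Overlap w x)
      have hV'sub : ∀ x ∈ V.filter (fun x => ¬ Overlap w x),
          x ∈ rest.filter (fun x => ¬ Overlap w x) := by
        intro x hx
        rw [Finset.mem_filter] at hx
        have hxl := hV x hx.1
        have hxw : x ≠ w := by
          intro h
          exact hx.2 (h ▸ overlap_self (hle x hxl))
        rw [List.mem_filter]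
        refine ⟨?_, by simpa using hx.2⟩
        rcases List.mem_cons.mp hxl with h | h
        · exact absurd h hxw
        · exact h
      have hIH := ih (rest.filter (fun x => ¬ Overlap w x))
        (le_trans (List.length_filter_le _ _) (by simpa using Nat.lt_succ_iff.mp hlen))
        (fun x hx => hle x (List.mem_cons_of_mem _ (List.mem_of_mem_filter hx)))
        (((List.pairwise_cons.mp hpw).2).filter _)
        (V.filter (fun x => ¬ Overlap w x)) hV'sub
        (fun a ha b hb hab =>
          hno a (Finset.mem_filter.mp ha).1 b (Finset.mem_filter.mp hb).1 hab)
      omega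



/-- `|nm(G;s)|` equals the maximum cardinality of a collection of pairwise
non-overlapping contiguous sub-windows of `s`, each covering `G`. -/
theorem nm_isGreatest {σ : Type} (G : Episode σ) (s : List σ) :
    IsGreatest
      {n : ℕ | ∃ V : Finset (ℕ × ℕ),
        (∀ w ∈ V, 1 ≤ w.1 ∧ w.1 ≤ w.2 ∧ w.2 ≤ s.length ∧ Covers (window s w.1 w.2) G) ∧
        (∀ w ∈ V, ∀ x ∈ V, w ≠ x → ¬ Overlap w x) ∧
        V.card = n}
      ((nm G s).length) := by
  constructor
  · -- membership: the greedy collection itself witnesses the value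
    have hnodup : (nm G s).Nodup := by
      refine (greedy_pairwise (minWinList G s)).imp_of_mem ?_
      intro a b ha hb hno heq
      have hma := mem_minWinList.mp (greedy_subset _ a ha)
      exact hno (heq ▸ overlap_self hma.2.1)
    refine ⟨(nm G s).toFinset, ?_, ?_, ?_⟩
    · intro w hw
      rw [List.mem_toFinset] at hw
      have hm := mem_minWinList.mp (greedy_subset _ w hw)
      exact ⟨hm.1, hm.2.1, hm.2.2.1, hm.2.2.2.1⟩
    · intro w hw x hx hne
      rw [List.mem_toFinset] at hw hx
      have hsym : Symmetric (fun a b : ℕ × ℕ => ¬ Overlap a b) :=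
        fun a b h ho => h (overlap_symm ho)
      haveI : Std.Symm (fun a b : ℕ × ℕ => ¬ Overlap a b) := ⟨hsym⟩
      exact (greedy_pairwise (minWinList G s)).forall hw hx hne
    · exact List.toFinset_card_of_nodup hnodup
  · -- upper bound
    rintro n ⟨V, hVc, hVno, rfl⟩
    have hm : ∀ w ∈ V, w.1 ≤ (shrink G s w).1 ∧ (shrink G s w).1 ≤ (shrink G s w).2 ∧
        (shrink G s w).2 ≤ w.2 ∧ MinWinAt G s (shrink G s w) := by
      intro w hw
      obtain ⟨h1, h2, h3, h4⟩ := hVc w hw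
      exact shrink_spec h1 h2 h3 h4
    have hinj : Set.InjOn (shrink G s) ↑V := by
      intro a ha b hb hab
      by_contra hne
      obtain ⟨h1a, h2a, h3a, -⟩ := hm a ha
      obtain ⟨h1b, h2b, h3b, -⟩ := hm b hb
      have e1 : (shrink G s a).1 = (shrink G s b).1 := by rw [hab]
      have e2 : (shrink G s a).2 = (shrink G s b).2 := by rw [hab]
      exact hVno a ha b hb hne ⟨by omega, by omega⟩
    have hcard : (V.image (shrink G s)).card = V.card := Finset.card_image_of_injOn hinj
    have hopt := greedy_opt (minWinList G s).length (minWinList G s) le_rfl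
      (fun x hx => (mem_minWinList.mp hx).2.1)
      minWinList_pairwise
      (V.image (shrink G s))
      (by
        intro x hx
        rw [Finset.mem_image] at hx
        obtain ⟨w, hw, rfl⟩ := hx
        exact mem_minWinList.mpr (hm w hw).2.2.2)
      (by
        intro x hx y hy hxy
        rw [Finset.mem_image] at hx hy
        obtain ⟨a, ha, rfl⟩ := hx
        obtain ⟨b, hb, rfl⟩ := hy
        have hne : a ≠ b := fun h => hxy (by rw [h])
        have hab := hVno a ha b hb hne
        obtain ⟨h1a, h2a, h3a, -⟩ := hm a ha
        obtain ⟨h1b, h2b, h3b, -⟩ := hm b hb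
        rintro ⟨o1, o2⟩
        exact hab ⟨by omega, by omega⟩)
    rw [hcard] at hopt
    exact hopt
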